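/- arXiv:1612.07876 — 6 statements merged into one kernel-verified Lean document; each statement's English description precedes it below -/
import Mathlib

section
/- Let G₁ and G₂ be groups, L a group, H ≤ G₁ and K ≤ G₂ subgroups, and let φ, φ′ : H → L and ψ, ψ′ : K → L be surjective group homomorphisms. Then the amalgamated subgroups satisfy H ^φ×_L^ψ K = H ^{φ′}×_L^{ψ′} K if and only if there exists a group automorphism γ of L such that φ = γ ∘ φ′ and ψ = γ ∘ ψ′. -/
/-- The amalgamated subgroup `H ^φ×_L^ψ K = {(h,k) ∈ H × K : φ(h) = ψ(k)}` of `G₁ × G₂`. -/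
def amalg {G₁ G₂ : Type*} [Group G₁] [Group G₂] (H : Subgroup G₁) (K : Subgroup G₂)
    {L : Type*} [Group L] (φ : H →* L) (ψ : K →* L) : Subgroup (G₁ × G₂) where
  carrier := {x | ∃ (h₁ : x.1 ∈ H) (h₂ : x.2 ∈ K), φ ⟨x.1, h₁⟩ = ψ ⟨x.2, h₂⟩}
  one_mem' := ⟨H.one_mem, K.one_mem, by
    show φ 1 = ψ 1
    rw [map_one, map_one]⟩
  mul_mem' := by
    intro a b ha hb
    obtain ⟨ha₁, ha₂, hae⟩ := ha
    obtain ⟨hb₁, hb₂, hbe⟩ := hb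
    refine ⟨H.mul_mem ha₁ hb₁, K.mul_mem ha₂ hb₂, ?_⟩
    show φ (⟨a.1, ha₁⟩ * ⟨b.1, hb₁⟩) = ψ (⟨a.2, ha₂⟩ * ⟨b.2, hb₂⟩)
    rw [map_mul, map_mul, hae, hbe]
  inv_mem' := by
    intro a ha
    obtain ⟨ha₁, ha₂, hae⟩ := ha
    refine ⟨H.inv_mem ha₁, K.inv_mem ha₂, ?_⟩
    show φ (⟨a.1, ha₁⟩⁻¹) = ψ (⟨a.2, ha₂⟩⁻¹)
    rw [map_inv, map_inv, hae]

lemma mem_amalg {G₁ G₂ : Type*} [Group G₁] [Group G₂] (H : Subgroup G₁) (K : Subgroup G₂)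
    {L : Type*} [Group L] (φ : H →* L) (ψ : K →* L) (a : H) (b : K) :
    ((a : G₁), (b : G₂)) ∈ amalg H K φ ψ ↔ φ a = ψ b := by
  constructor
  · rintro ⟨h₁, h₂, he⟩
    convert he <;> exact Subtype.ext rfl
  · intro he
    exact ⟨a.2, b.2, by convert he <;> exact Subtype.ext rfl⟩

/-- Two amalgamated subgroups `H ^φ×_L^ψ K` and `H ^{φ′}×_L^{ψ′} K` (with all four
homomorphisms surjective) are equal iff there is an automorphism `γ` of `L` with
`φ = γ ∘ φ′` and `ψ = γ ∘ ψ′`. -/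
theorem amalg_eq_iff_exists_aut
    {G₁ G₂ L : Type*} [Group G₁] [Group G₂] [Group L]
    (H : Subgroup G₁) (K : Subgroup G₂)
    (φ φ' : H →* L) (ψ ψ' : K →* L)
    (hφ : Function.Surjective φ) (hφ' : Function.Surjective φ')
    (hψ : Function.Surjective ψ) (hψ' : Function.Surjective ψ') :
    amalg H K φ ψ = amalg H K φ' ψ' ↔
      ∃ γ : L ≃* L, (∀ h : H, φ h = γ (φ' h)) ∧ (∀ k : K, ψ k = γ (ψ' k)) := by

  constructor
  · intro heq
    have key1 : ∀ a b : H, φ' a = φ' b → φ a = φ b := by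
      intro a b hab
      obtain ⟨k, hk⟩ := hψ' (φ' a)
      have h1 : φ a = ψ k := by
        rw [← mem_amalg H K φ ψ, heq, mem_amalg, hk]
      have h2 : φ b = ψ k := by
        rw [← mem_amalg H K φ ψ, heq, mem_amalg, hk, hab]
      rw [h1, h2]
    have key2 : ∀ a b : H, φ a = φ b → φ' a = φ' b := by
      intro a b hab
      obtain ⟨k, hk⟩ := hψ (φ a)
      have h1 : φ' a = ψ' k := by
        rw [← mem_amalg H K φ' ψ', ← heq, mem_amalg, hk]
      have h2 : φ' b = ψ' k := by
        rw [← mem_amalg H K φ' ψ', ← heq, mem_amalg, ← hab, hk]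
      rw [h1, h2]
    set s := Function.surjInv hφ' with hs
    have hsI : ∀ l, φ' (s l) = l := Function.surjInv_eq hφ'
    set g : L → L := fun l => φ (s l) with hg
    have hgφ : ∀ a : H, g (φ' a) = φ a := fun a => key1 _ _ (hsI _)
    have hmul : ∀ l₁ l₂, g (l₁ * l₂) = g l₁ * g l₂ := by
      intro l₁ l₂
      have : φ' (s (l₁ * l₂)) = φ' (s l₁ * s l₂) := by
        rw [map_mul, hsI, hsI, hsI]
      calc g (l₁ * l₂) = φ (s l₁ * s l₂) := key1 _ _ this
        _ = g l₁ * g l₂ := map_mul φ _ _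
    have hinj : Function.Injective g := by
      intro l₁ l₂ h12
      rw [← hsI l₁, ← hsI l₂]
      exact key2 _ _ h12
    have hsurj : Function.Surjective g := by
      intro m
      obtain ⟨a, ha⟩ := hφ m
      exact ⟨φ' a, by rw [hgφ, ha]⟩
    refine ⟨MulEquiv.mk (Equiv.ofBijective g ⟨hinj, hsurj⟩) hmul, fun a => (hgφ a).symm, ?_⟩
    intro k
    obtain ⟨a, ha⟩ := hφ' (ψ' k)
    have h1 : φ a = ψ k := by
      rw [← mem_amalg H K φ ψ, heq, mem_amalg, ha]
    show ψ k = g (ψ' k)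
    rw [← ha, hgφ, h1]
  · rintro ⟨γ, hγφ, hγψ⟩
    ext x
    constructor
    · rintro ⟨h₁, h₂, he⟩
      refine ⟨h₁, h₂, ?_⟩
      apply γ.injective
      rw [← hγφ, ← hγψ, he]
    · rintro ⟨h₁, h₂, he⟩
      exact ⟨h₁, h₂, by rw [hγφ, hγψ, he]⟩
end

section
/- Let G₁ and G₂ be groups, L a group, H ≤ G₁ and K ≤ G₂ subgroups, H₀ a normal subgroup of H and K₀ a normal subgroup of K. Let φ, φ′ : H → L be surjective homomorphisms with Ker φ = Ker φ′ = H₀ and ψ, ψ′ : K → L surjective homomorphisms with Ker ψ = Ker ψ′ = K₀. Then the amalgamated subgroups H ^φ×_L^ψ K and H ^{φ′}×_L^{ψ′} K are conjugate in G₁ × G₂ if and only if there exist a ∈ N_{G₁}(H) ∩ N_{G₁}(H₀), b ∈ N_{G₂}(K) ∩ N_{G₂}(K₀) and an automorphism γ of L such that φ(h) = γ(φ′(a⁻¹ h a)) for all h ∈ H and ψ(k) = γ(ψ′(b⁻¹ k b)) for all k ∈ K. -/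
/-!
Conjugation by `(a⁻¹, b⁻¹)` carries `H ^φ×_L^ψ K` onto `H ^{φ′}×_L^{ψ′} K` exactly when
`(h, k) ∈ H ^φ×_L^ψ K ↔ (a⁻¹ha, b⁻¹kb) ∈ H ^{φ′}×_L^{ψ′} K`. As `ψ` is onto, `H` is the
projection of the amalgam to `G₁`, and `H₀ = ker φ` is its intersection with `G₁ × 1`; both are
read off the amalgam, so a conjugating `a` normalizes `H` and `H₀`. Then `h ↦ φ′(a⁻¹ha)` is an
epimorphism `H → L` with the same kernel as `φ`, so the two differ by an automorphism `γ` of `L`,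
and the amalgam relation transports `γ` to the `K` side.
-/

open Subgroup

theorem MonoidHom.exists_mulEquiv_apply_eq_of_ker_eq {G L : Type*} [Group G] [Group L]
    {f₁ f₂ : G →* L} (h₁ : Function.Surjective f₁) (h₂ : Function.Surjective f₂)
    (h : f₂.ker = f₁.ker) : ∃ γ : L ≃* L, ∀ g, f₁ g = γ (f₂ g) := by
  refine ⟨(QuotientGroup.quotientKerEquivOfSurjective f₂ h₂).symm.trans
    ((QuotientGroup.quotientMulEquivOfEq h).trans
      (QuotientGroup.quotientKerEquivOfSurjective f₁ h₁)), fun g => ?_⟩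
  have hg : (QuotientGroup.quotientKerEquivOfSurjective f₂ h₂).symm (f₂ g) = g :=
    (MulEquiv.symm_apply_eq _).2 rfl
  simp only [MulEquiv.trans_apply, hg, QuotientGroup.quotientMulEquivOfEq_mk]
  rfl

theorem Subgroup.map_conj_prod_inv_eq_iff {G₁ G₂ : Type*} [Group G₁] [Group G₂]
    (A B : Subgroup (G₁ × G₂)) (a : G₁) (b : G₂) :
    A.map (MulAut.conj (a⁻¹, b⁻¹)).toMonoidHom = B ↔
      ∀ x y, (x, y) ∈ A ↔ (a⁻¹ * x * a, b⁻¹ * y * b) ∈ B := by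
  refine ⟨fun hAB x y => ?_, fun h => ?_⟩
  · rw [← hAB, mem_map_equiv]
    simp [mul_assoc]
  · ext ⟨x, y⟩
    rw [mem_map_equiv]
    simp only [MulAut.conj_symm_apply, Prod.inv_mk, Prod.mk_mul_mk, inv_inv, h]
    simp [mul_assoc]

section

variable {G₁ G₂ L : Type*} [Group G₁] [Group G₂] [Group L]
  {H H₀ : Subgroup G₁} {K K₀ : Subgroup G₂} {φ φ' : H →* L} {ψ ψ' : K →* L}

theorem exists_mk_mem_amalg_iff_left (hψ : Function.Surjective ψ) {x : G₁} :
    (∃ y, (x, y) ∈ amalg H K φ ψ) ↔ x ∈ H := by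
  refine ⟨fun ⟨_, hx, _⟩ => hx, fun hx => ?_⟩
  obtain ⟨k, hk⟩ := hψ (φ ⟨x, hx⟩)
  exact ⟨k, hx, k.2, hk.symm⟩

theorem exists_mk_mem_amalg_iff_right (hφ : Function.Surjective φ) {y : G₂} :
    (∃ x, (x, y) ∈ amalg H K φ ψ) ↔ y ∈ K := by
  refine ⟨fun ⟨_, _, hy, _⟩ => hy, fun hy => ?_⟩
  obtain ⟨h, hh⟩ := hφ (ψ ⟨y, hy⟩)
  exact ⟨h, h.2, hy, hh⟩

theorem mk_one_mem_amalg_iff (hH₀ : H₀ ≤ H) (hkφ : φ.ker = H₀.subgroupOf H) {x : G₁} :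
    (x, 1) ∈ amalg H K φ ψ ↔ x ∈ H₀ := by
  have hker (hx : x ∈ H) : φ ⟨x, hx⟩ = 1 ↔ x ∈ H₀ := by
    rw [← MonoidHom.mem_ker, hkφ, mem_subgroupOf]
  refine ⟨fun ⟨hx, _, he⟩ => (hker hx).1 (he.trans (map_one ψ)), fun hx => ?_⟩
  exact ⟨hH₀ hx, K.one_mem, ((hker _).2 hx).trans (map_one ψ).symm⟩

theorem one_mk_mem_amalg_iff (hK₀ : K₀ ≤ K) (hkψ : ψ.ker = K₀.subgroupOf K) {y : G₂} :
    (1, y) ∈ amalg H K φ ψ ↔ y ∈ K₀ := by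
  have hker (hy : y ∈ K) : ψ ⟨y, hy⟩ = 1 ↔ y ∈ K₀ := by
    rw [← MonoidHom.mem_ker, hkψ, mem_subgroupOf]
  refine ⟨fun ⟨_, hy, he⟩ => (hker hy).1 (he.symm.trans (map_one φ)), fun hy => ?_⟩
  exact ⟨H.one_mem, hK₀ hy, (map_one φ).trans ((hker _).2 hy).symm⟩

theorem mem_amalg_iff_conj_mem_amalg_of_mulEquiv {a : G₁} {b : G₂} {γ : L ≃* L}
    (ha : a ∈ normalizer (H : Set G₁)) (hb : b ∈ normalizer (K : Set G₂))
    (hφγ : ∀ (h : G₁) (hh : h ∈ H) (hh' : a⁻¹ * h * a ∈ H),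
      φ ⟨h, hh⟩ = γ (φ' ⟨a⁻¹ * h * a, hh'⟩))
    (hψγ : ∀ (k : G₂) (hk : k ∈ K) (hk' : b⁻¹ * k * b ∈ K),
      ψ ⟨k, hk⟩ = γ (ψ' ⟨b⁻¹ * k * b, hk'⟩)) (x : G₁) (y : G₂) :
    (x, y) ∈ amalg H K φ ψ ↔ (a⁻¹ * x * a, b⁻¹ * y * b) ∈ amalg H K φ' ψ' := by
  have hx := mem_normalizer_iff''.1 ha x
  have hy := mem_normalizer_iff''.1 hb y
  constructor
  · rintro ⟨hxH, hyK, he⟩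
    exact ⟨hx.1 hxH, hy.1 hyK, γ.injective <| by rw [← hφγ x hxH, ← hψγ y hyK, he]⟩
  · rintro ⟨hxH, hyK, he⟩
    exact ⟨hx.2 hxH, hy.2 hyK, by rw [hφγ _ _ hxH, hψγ _ _ hyK, he]⟩

section Conj

variable {a : G₁} {b : G₂}

theorem mem_normalizer_of_amalg_conj_left (hψ : Function.Surjective ψ)
    (hψ' : Function.Surjective ψ')
    (hconj : ∀ x y, (x, y) ∈ amalg H K φ ψ ↔ (a⁻¹ * x * a, b⁻¹ * y * b) ∈ amalg H K φ' ψ') :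
    a ∈ normalizer (H : Set G₁) := by
  refine mem_normalizer_iff''.2 fun x => ?_
  rw [← exists_mk_mem_amalg_iff_left hψ (φ := φ), ← exists_mk_mem_amalg_iff_left hψ' (φ := φ')]
  simpa only [hconj, MulAut.conj_symm_apply] using ((MulAut.conj b).symm.surjective.exists
    (p := fun y => (a⁻¹ * x * a, y) ∈ amalg H K φ' ψ')).symm

theorem mem_normalizer_of_amalg_conj_right (hφ : Function.Surjective φ)
    (hφ' : Function.Surjective φ')
    (hconj : ∀ x y, (x, y) ∈ amalg H K φ ψ ↔ (a⁻¹ * x * a, b⁻¹ * y * b) ∈ amalg H K φ' ψ') :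
    b ∈ normalizer (K : Set G₂) := by
  refine mem_normalizer_iff''.2 fun y => ?_
  rw [← exists_mk_mem_amalg_iff_right hφ (ψ := ψ), ← exists_mk_mem_amalg_iff_right hφ' (ψ := ψ')]
  simpa only [hconj, MulAut.conj_symm_apply] using ((MulAut.conj a).symm.surjective.exists
    (p := fun x => (x, b⁻¹ * y * b) ∈ amalg H K φ' ψ')).symm

theorem mem_normalizer_ker_of_amalg_conj_left (hH₀ : H₀ ≤ H)
    (hkφ : φ.ker = H₀.subgroupOf H) (hkφ' : φ'.ker = H₀.subgroupOf H)
    (hconj : ∀ x y, (x, y) ∈ amalg H K φ ψ ↔ (a⁻¹ * x * a, b⁻¹ * y * b) ∈ amalg H K φ' ψ') :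
    a ∈ normalizer (H₀ : Set G₁) :=
  mem_normalizer_iff''.2 fun x => by
    rw [← mk_one_mem_amalg_iff hH₀ hkφ (ψ := ψ), hconj, mul_one, inv_mul_cancel,
      mk_one_mem_amalg_iff hH₀ hkφ']

theorem mem_normalizer_ker_of_amalg_conj_right (hK₀ : K₀ ≤ K)
    (hkψ : ψ.ker = K₀.subgroupOf K) (hkψ' : ψ'.ker = K₀.subgroupOf K)
    (hconj : ∀ x y, (x, y) ∈ amalg H K φ ψ ↔ (a⁻¹ * x * a, b⁻¹ * y * b) ∈ amalg H K φ' ψ') :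
    b ∈ normalizer (K₀ : Set G₂) :=
  mem_normalizer_iff''.2 fun y => by
    rw [← one_mk_mem_amalg_iff hK₀ hkψ (φ := φ), hconj, mul_one, inv_mul_cancel,
      one_mk_mem_amalg_iff hK₀ hkψ']

theorem exists_mulEquiv_of_amalg_conj (hφ : Function.Surjective φ) (hφ' : Function.Surjective φ')
    (hkφ : φ.ker = H₀.subgroupOf H) (hkφ' : φ'.ker = H₀.subgroupOf H)
    (ha : a ∈ normalizer (H : Set G₁)) (ha₀ : a ∈ normalizer (H₀ : Set G₁))
    (hconj : ∀ x y, (x, y) ∈ amalg H K φ ψ ↔ (a⁻¹ * x * a, b⁻¹ * y * b) ∈ amalg H K φ' ψ') :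
    ∃ γ : L ≃* L,
      (∀ (h : G₁) (hh : h ∈ H) (hh' : a⁻¹ * h * a ∈ H),
        φ ⟨h, hh⟩ = γ (φ' ⟨a⁻¹ * h * a, hh'⟩)) ∧
      (∀ (k : G₂) (hk : k ∈ K) (hk' : b⁻¹ * k * b ∈ K),
        ψ ⟨k, hk⟩ = γ (ψ' ⟨b⁻¹ * k * b, hk'⟩)) := by
  let c : H ≃* H := normalizerMonoidHom H ⟨a, ha⟩⁻¹
  have hc (h : H) : (c h : G₁) = a⁻¹ * h * a := by simp [c]
  obtain ⟨γ, hγ⟩ := MonoidHom.exists_mulEquiv_apply_eq_of_ker_eq hφ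
    (f₂ := φ'.comp c.toMonoidHom) (hφ'.comp c.surjective) <| by
      ext h
      rw [MonoidHom.mem_ker, MonoidHom.comp_apply, ← MonoidHom.mem_ker, hkφ', hkφ,
        mem_subgroupOf, mem_subgroupOf, MulEquiv.coe_toMonoidHom, hc]
      exact (mem_normalizer_iff''.1 ha₀ h).symm
  have hφγ (h : G₁) (hh : h ∈ H) (hh' : a⁻¹ * h * a ∈ H) :
      φ ⟨h, hh⟩ = γ (φ' ⟨a⁻¹ * h * a, hh'⟩) := by
    rw [hγ]
    exact congrArg (fun h' => γ (φ' h')) (Subtype.ext (hc ⟨h, hh⟩))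
  refine ⟨γ, hφγ, fun k hk hk' => ?_⟩
  obtain ⟨h, hh⟩ := hφ (ψ ⟨k, hk⟩)
  obtain ⟨_, _, he⟩ := (hconj h k).1 ⟨h.2, hk, hh⟩
  rw [← hh, hφγ _ h.2 ((mem_normalizer_iff''.1 ha h).1 h.2), he]

end Conj

end

theorem amalg_conjugate_iff_same_kernels_general
    {G₁ G₂ L : Type*} [Group G₁] [Group G₂] [Group L]
    (H : Subgroup G₁) (K : Subgroup G₂) (H₀ : Subgroup G₁) (K₀ : Subgroup G₂)
    (hH₀ : H₀ ≤ H) (hK₀ : K₀ ≤ K)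
    (φ φ' : H →* L) (ψ ψ' : K →* L)
    (hφ : Function.Surjective φ) (hφ' : Function.Surjective φ')
    (hψ : Function.Surjective ψ) (hψ' : Function.Surjective ψ')
    (hkφ : φ.ker = H₀.subgroupOf H) (hkφ' : φ'.ker = H₀.subgroupOf H)
    (hkψ : ψ.ker = K₀.subgroupOf K) (hkψ' : ψ'.ker = K₀.subgroupOf K) :
    (∃ g : G₁ × G₂, (amalg H K φ ψ).map (MulAut.conj g).toMonoidHom = amalg H K φ' ψ') ↔
      ∃ (a : G₁) (b : G₂) (γ : L ≃* L),
        a ∈ Subgroup.normalizer (H : Set G₁) ⊓ Subgroup.normalizer (H₀ : Set G₁) ∧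
        b ∈ Subgroup.normalizer (K : Set G₂) ⊓ Subgroup.normalizer (K₀ : Set G₂) ∧
        (∀ (h : G₁) (hh : h ∈ H) (hh' : a⁻¹ * h * a ∈ H),
          φ ⟨h, hh⟩ = γ (φ' ⟨a⁻¹ * h * a, hh'⟩)) ∧
        (∀ (k : G₂) (hk : k ∈ K) (hk' : b⁻¹ * k * b ∈ K),
          ψ ⟨k, hk⟩ = γ (ψ' ⟨b⁻¹ * k * b, hk'⟩)) := by
  constructor
  · rintro ⟨⟨a, b⟩, hconj⟩
    rw [← inv_inv a, ← inv_inv b, map_conj_prod_inv_eq_iff] at hconj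
    have ha := mem_normalizer_of_amalg_conj_left hψ hψ' hconj
    have ha₀ := mem_normalizer_ker_of_amalg_conj_left hH₀ hkφ hkφ' hconj
    obtain ⟨γ, hφγ, hψγ⟩ := exists_mulEquiv_of_amalg_conj hφ hφ' hkφ hkφ' ha ha₀ hconj
    exact ⟨a⁻¹, b⁻¹, γ, ⟨ha, ha₀⟩,
      ⟨mem_normalizer_of_amalg_conj_right hφ hφ' hconj,
        mem_normalizer_ker_of_amalg_conj_right hK₀ hkψ hkψ' hconj⟩, hφγ, hψγ⟩
  · rintro ⟨a, b, γ, ⟨ha, -⟩, ⟨hb, -⟩, hφγ, hψγ⟩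
    exact ⟨(a⁻¹, b⁻¹), (map_conj_prod_inv_eq_iff _ _ a b).2
      (mem_amalg_iff_conj_mem_amalg_of_mulEquiv ha hb hφγ hψγ)⟩

/-- Given `H₀ ⊴ H ≤ G₁`, `K₀ ⊴ K ≤ G₂` and epimorphisms `φ, φ′ : H → L` with kernel `H₀`
and `ψ, ψ′ : K → L` with kernel `K₀`, the amalgamated subgroups `H ^φ×_L^ψ K` and
`H ^{φ′}×_L^{ψ′} K` are conjugate in `G₁ × G₂` iff there are
`a ∈ N_{G₁}(H) ∩ N_{G₁}(H₀)`, `b ∈ N_{G₂}(K) ∩ N_{G₂}(K₀)` and `γ ∈ Aut(L)` such that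
`φ(h) = γ(φ′(a⁻¹ha))` for all `h ∈ H` and `ψ(k) = γ(ψ′(b⁻¹kb))` for all `k ∈ K`. -/
theorem amalg_conjugate_iff_same_kernels
    {G₁ G₂ L : Type*} [Group G₁] [Group G₂] [Group L]
    (H : Subgroup G₁) (K : Subgroup G₂) (H₀ : Subgroup G₁) (K₀ : Subgroup G₂)
    (hH₀ : H₀ ≤ H) (hK₀ : K₀ ≤ K)
    [hnH : (H₀.subgroupOf H).Normal] [hnK : (K₀.subgroupOf K).Normal]
    (φ φ' : H →* L) (ψ ψ' : K →* L)
    (hφ : Function.Surjective φ) (hφ' : Function.Surjective φ')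
    (hψ : Function.Surjective ψ) (hψ' : Function.Surjective ψ')
    (hkφ : φ.ker = H₀.subgroupOf H) (hkφ' : φ'.ker = H₀.subgroupOf H)
    (hkψ : ψ.ker = K₀.subgroupOf K) (hkψ' : ψ'.ker = K₀.subgroupOf K) :
    (∃ g : G₁ × G₂, (amalg H K φ ψ).map (MulAut.conj g).toMonoidHom = amalg H K φ' ψ') ↔
      ∃ (a : G₁) (b : G₂) (γ : L ≃* L),
        a ∈ Subgroup.normalizer (H : Set G₁) ⊓ Subgroup.normalizer (H₀ : Set G₁) ∧
        b ∈ Subgroup.normalizer (K : Set G₂) ⊓ Subgroup.normalizer (K₀ : Set G₂) ∧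
        (∀ (h : G₁) (hh : h ∈ H) (hh' : a⁻¹ * h * a ∈ H),
          φ ⟨h, hh⟩ = γ (φ' ⟨a⁻¹ * h * a, hh'⟩)) ∧
        (∀ (k : G₂) (hk : k ∈ K) (hk' : b⁻¹ * k * b ∈ K),
          ψ ⟨k, hk⟩ = γ (ψ' ⟨b⁻¹ * k * b, hk'⟩)) :=
  amalg_conjugate_iff_same_kernels_general H K H₀ K₀ hH₀ hK₀ φ φ' ψ ψ' hφ hφ' hψ hψ' hkφ hkφ' hkψ
    hkψ'
end

section
/- Let Γ be a finite group and let H be a closed subgroup of the topological group Γ × S¹, where S¹ is the circle group of complex numbers of modulus 1. Then exactly one of the following holds: either H = K × S¹ for some subgroup K ≤ Γ, or there exist a subgroup K ≤ Γ, a group homomorphism φ : K → S¹, and a positive integer l such that H = {(γ, z) ∈ K × S¹ : φ(γ) = z^l}. -/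
open Real

private lemma circle_exp_pow (t : ℝ) (n : ℕ) : Circle.exp t ^ n = Circle.exp (n * t) := by
  induction n with
  | zero => simp
  | succ k ih =>
      rw [pow_succ, ih, ← Circle.exp_add]
      congr 1
      push_cast
      ring

private lemma circle_exp_zpow (t : ℝ) (n : ℤ) : Circle.exp t ^ n = Circle.exp (n * t) := by
  rcases Int.eq_nat_or_neg n with ⟨m, rfl | rfl⟩
  · rw [zpow_natCast, circle_exp_pow]; push_cast; ring_nf
  · rw [zpow_neg, zpow_natCast, circle_exp_pow, ← Circle.exp_neg]; congr 1; push_cast; ring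

private lemma circle_subgroup_classify (N : Subgroup Circle) (hN : IsClosed (N : Set Circle)) :
    N = ⊤ ∨ ∃ l : ℕ, 0 < l ∧ ∀ z : Circle, z ∈ N ↔ z ^ l = 1 := by
  set S : AddSubgroup ℝ :=
    { carrier := Circle.exp ⁻¹' (N : Set Circle)
      zero_mem' := by
        simp only [Set.mem_preimage, Circle.exp_zero, SetLike.mem_coe]
        exact N.one_mem
      add_mem' := by
        intro a b ha hb
        simp only [Set.mem_preimage, Circle.exp_add, SetLike.mem_coe] at *
        exact N.mul_mem ha hb
      neg_mem' := by
        intro a ha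
        simp only [Set.mem_preimage, Circle.exp_neg, SetLike.mem_coe] at *
        exact N.inv_mem ha } with hSdef
  have hmem : ∀ t : ℝ, t ∈ S ↔ Circle.exp t ∈ N := fun t => Iff.rfl
  rcases S.dense_or_cyclic with hd | ⟨a, ha⟩
  · left
    have hSclosed : IsClosed (S : Set ℝ) := hN.preimage Circle.exp.continuous
    have huniv : (S : Set ℝ) = Set.univ := by
      rw [← hSclosed.closure_eq, hd.closure_eq]
    ext z
    simp only [Subgroup.mem_top, iff_true]
    have hz : Complex.arg ↑z ∈ S := by
      rw [← SetLike.mem_coe, huniv]; trivial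
    have := (hmem _).1 hz
    rwa [Circle.exp_arg] at this
  · right
    have h2pi : (2 * π : ℝ) ∈ S := by
      rw [hmem, Circle.exp_two_pi]
      exact N.one_mem
    rw [ha, AddSubgroup.mem_closure_singleton] at h2pi
    obtain ⟨n, hn⟩ := h2pi
    have hn0 : n ≠ 0 := by
      rintro rfl
      simp only [zero_smul] at hn
      have := Real.pi_pos
      linarith
    have hna : (n : ℝ) * a = 2 * π := by rwa [zsmul_eq_mul] at hn
    refine ⟨n.natAbs, Int.natAbs_pos.mpr hn0, fun z => ?_⟩
    constructor
    · intro hzN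
      have hz : Complex.arg ↑z ∈ S := by
        rw [hmem, Circle.exp_arg]; exact hzN
      rw [ha, AddSubgroup.mem_closure_singleton] at hz
      obtain ⟨m, hm⟩ := hz
      have hzeq : z = Circle.exp ((m : ℝ) * a) := by
        rw [← Circle.exp_arg z, ← hm, zsmul_eq_mul]
      have hzn : z ^ n = 1 := by
        rw [hzeq, circle_exp_zpow]
        have : (n : ℝ) * ((m : ℝ) * a) = (m : ℝ) * (2 * π) := by
          rw [← hna]; ring
        rw [this]
        exact Circle.exp_int_mul_two_pi m
      rcases Int.natAbs_eq n with h | h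
      · rw [← zpow_natCast, ← h, hzn]
      · have : z ^ (-(n.natAbs : ℤ)) = 1 := by rw [← h, hzn]
        rw [zpow_neg, zpow_natCast, inv_eq_one] at this
        exact this
    · intro hzl
      have hl' : ((n.natAbs : ℕ) : ℝ) ≠ 0 := by
        exact_mod_cast (Int.natAbs_pos.mpr hn0).ne'
      have hexp1 : Circle.exp ((n.natAbs : ℝ) * Complex.arg ↑z) = 1 := by
        rw [← circle_exp_pow, Circle.exp_arg]
        exact hzl
      obtain ⟨k, hk⟩ := Circle.exp_eq_one.mp hexp1
      -- hk : (n.natAbs : ℝ) * arg z = k * (2 * π)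
      have key : ∃ m : ℤ, m • a = Complex.arg ↑z := by
        rcases Int.natAbs_eq n with h | h
        · refine ⟨k, ?_⟩
          rw [zsmul_eq_mul]
          have hcast : ((n.natAbs : ℕ) : ℝ) = (n : ℝ) := by
            have h2 : (0 : ℤ) ≤ n := by omega
            rw [Nat.cast_natAbs]
            exact_mod_cast congrArg (fun x : ℤ => (x : ℝ)) (abs_of_nonneg h2)
          apply mul_left_cancel₀ hl'
          rw [hk, hcast, ← hna]
          ring
        · refine ⟨-k, ?_⟩
          rw [zsmul_eq_mul]
          push_cast
          have hcast : ((n.natAbs : ℕ) : ℝ) = -(n : ℝ) := by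
            have h2 : n ≤ (0 : ℤ) := by omega
            rw [Nat.cast_natAbs]
            exact_mod_cast congrArg (fun x : ℤ => (x : ℝ)) (abs_of_nonpos h2)
          apply mul_left_cancel₀ hl'
          rw [hk, hcast, ← hna]
          ring
      obtain ⟨m, hm⟩ := key
      have : Complex.arg ↑z ∈ S := by
        rw [ha, AddSubgroup.mem_closure_singleton]; exact ⟨m, hm⟩
      have := (hmem _).1 this
      rwa [Circle.exp_arg] at this

private lemma circle_pow_ne (l : ℕ) (hl : 0 < l) : ∃ z : Circle, z ^ l ≠ 1 := by
  refine ⟨Circle.exp (π / l), ?_⟩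
  rw [circle_exp_pow]
  have hl' : (l : ℝ) ≠ 0 := Nat.cast_ne_zero.mpr hl.ne'
  rw [mul_div_cancel₀ _ hl']
  intro h
  obtain ⟨n, hn⟩ := Circle.exp_eq_one.mp h
  have h1 : (1 : ℝ) = 2 * n := by
    have h2 : π * 1 = π * (2 * n) := by linear_combination hn
    exact mul_left_cancel₀ Real.pi_ne_zero h2
  have h3 : (1 : ℤ) = 2 * n := by exact_mod_cast h1
  omega


/-- Every closed subgroup `H` of `Γ × S¹` (`Γ` a finite group with the discrete topology,
`S¹` the circle group) is either a product subgroup `K × S¹` for some `K ≤ Γ`, or a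
`φ`-twisted `l`-folded subgroup `K^{φ,l} = {(γ,z) ∈ K × S¹ : φ(γ) = z^l}` for some
`K ≤ Γ`, homomorphism `φ : K → S¹` and positive integer `l` — and exactly one of these
two alternatives holds. -/
theorem closed_subgroup_of_finite_mul_circle
    (Γ : Type*) [Group Γ] [Finite Γ] [TopologicalSpace Γ] [DiscreteTopology Γ]
    (H : Subgroup (Γ × Circle)) (hH : IsClosed (H : Set (Γ × Circle))) :
    Xor' (∃ K : Subgroup Γ, H = K.prod ⊤)
      (∃ (K : Subgroup Γ) (φ : K →* Circle) (l : ℕ), 0 < l ∧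
        ∀ x : Γ × Circle, x ∈ H ↔ ∃ hk : x.1 ∈ K, φ ⟨x.1, hk⟩ = x.2 ^ l) := by
  classical
  set N : Subgroup Circle := H.comap (MonoidHom.inr Γ Circle) with hNdef
  have hNmem : ∀ z : Circle, z ∈ N ↔ ((1 : Γ), z) ∈ H := fun z => Iff.rfl
  have hNclosed : IsClosed (N : Set Circle) := by
    have hc : Continuous (fun z : Circle => ((1 : Γ), z)) :=
      continuous_const.prodMk continuous_id
    exact hH.preimage hc
  set K : Subgroup Γ := H.map (MonoidHom.fst Γ Circle) with hKdef
  have hKmem : ∀ γ : Γ, γ ∈ K ↔ ∃ z, (γ, z) ∈ H := by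
    intro γ
    constructor
    · rintro ⟨⟨g, z⟩, hgz, rfl⟩
      exact ⟨z, hgz⟩
    · rintro ⟨z, hz⟩
      exact ⟨(γ, z), hz, rfl⟩
  rcases circle_subgroup_classify N hNclosed with hTop | ⟨l, hl, hlN⟩
  · -- product case
    refine Or.inl ⟨⟨K, ?_⟩, ?_⟩
    · ext x
      obtain ⟨γ, z⟩ := x
      simp only [Subgroup.mem_prod, Subgroup.mem_top, and_true]
      constructor
      · intro h
        exact (hKmem γ).2 ⟨z, h⟩
      · intro hγ
        obtain ⟨w, hw⟩ := (hKmem γ).1 hγ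
        have h1 : ((1 : Γ), w⁻¹ * z) ∈ H := by
          refine (hNmem _).1 ?_
          rw [hTop]
          trivial
        have h2 := H.mul_mem hw h1
        simpa using h2
    · rintro ⟨K', φ, l, hl, hiff⟩
      obtain ⟨z, hz⟩ := circle_pow_ne l hl
      have hzH : ((1 : Γ), z) ∈ H := by
        refine (hNmem _).1 ?_
        rw [hTop]; trivial
      obtain ⟨hk, hφ⟩ := (hiff ((1 : Γ), z)).1 hzH
      have h1 : φ ⟨(1 : Γ), hk⟩ = 1 := by
        have he : (⟨(1 : Γ), hk⟩ : K') = 1 := Subtype.ext rfl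
        rw [he, map_one]
      exact hz (h1 ▸ hφ).symm
  · -- twisted case
    refine Or.inr ⟨?_, ?_⟩
    · -- construct φ
      have hwd : ∀ (γ : Γ) (z w : Circle), (γ, z) ∈ H → (γ, w) ∈ H → z ^ l = w ^ l := by
        intro γ z w hz hw
        have hzw : ((1 : Γ), z⁻¹ * w) ∈ H := by
          have := H.mul_mem (H.inv_mem hz) hw
          simpa using this
        have h1 : (z⁻¹ * w) ^ l = 1 := (hlN _).1 ((hNmem _).2 hzw)
        rw [mul_pow, inv_pow, inv_mul_eq_one] at h1
        exact h1
      choose wit hwit using fun k : K => (hKmem k).1 k.2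
      set f : K → Circle := fun k => wit k ^ l with hf
      have hfm : ∀ k₁ k₂ : K, f (k₁ * k₂) = f k₁ * f k₂ := by
        intro k₁ k₂
        have h12 : ((↑(k₁ * k₂) : Γ), wit k₁ * wit k₂) ∈ H := by
          have := H.mul_mem (hwit k₁) (hwit k₂)
          exact this
        have h := hwd _ _ _ (hwit (k₁ * k₂)) h12
        simpa [hf, mul_pow] using h
      refine ⟨K, MonoidHom.mk' f hfm, l, hl, ?_⟩
      rintro ⟨γ, z⟩
      constructor
      · intro hx
        have hk : γ ∈ K := (hKmem γ).2 ⟨z, hx⟩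
        exact ⟨hk, hwd γ _ z (hwit ⟨γ, hk⟩) hx⟩
      · rintro ⟨hk, hφ⟩
        have hφ' : wit ⟨γ, hk⟩ ^ l = z ^ l := hφ
        have hmN : (wit ⟨γ, hk⟩)⁻¹ * z ∈ N := by
          refine (hlN _).2 ?_
          rw [mul_pow, inv_pow, hφ', inv_mul_cancel]
        have h1 : ((1 : Γ), (wit ⟨γ, hk⟩)⁻¹ * z) ∈ H := (hNmem _).1 hmN
        have h2 := H.mul_mem (hwit ⟨γ, hk⟩) h1
        simpa using h2
    · -- refute product
      rintro ⟨K', hK'⟩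
      obtain ⟨z, hz⟩ := circle_pow_ne l hl
      have hzH : ((1 : Γ), z) ∈ H := by
        rw [hK']
        exact ⟨K'.one_mem, trivial⟩
      exact hz ((hlN z).1 ((hNmem z).2 hzH))
end

section
/- Let 𝓗 be a real Hilbert space, φ : 𝓗 → ℝ a continuously differentiable functional whose gradient ∇φ : 𝓗 → 𝓗 is completely continuous, and let Ω ⊂ 𝓗 be a bounded open set such that x - ∇φ(x) ≠ 0 for all x ∈ ∂Ω. Let (Pₙ) be a sequence of orthogonal projections on 𝓗 such that each subspace 𝓗ₙ := Pₙ(𝓗) is finite-dimensional, 𝓗ₙ ⊆ 𝓗ₙ₊₁ for all n, and Pₙ x → x as n → ∞ for every x ∈ 𝓗. Then there exists N ∈ ℕ such that for all n ≥ N and all x ∈ ∂Ω with x ∈ 𝓗ₙ, one has x - Pₙ ∇φ(x) ≠ 0. -/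
/-!
Argue by contradiction: otherwise there are `nₖ → ∞` and `xₖ ∈ ∂Ω` with `xₖ = Pₙₖ ∇φ(xₖ)`.
Since `∂Ω` is bounded, complete continuity gives a subsequence with `∇φ(xₖ) → y`. The projections
are nonexpansive and converge strongly to the identity, so `xₖ = Pₙₖ ∇φ(xₖ) → y` as well; hence
`y ∈ ∂Ω` and, by continuity, `∇φ(y) = y`, contradicting admissibility.
-/

open Filter Topology Function

theorem lipschitzWith_one_of_inner_map_eq_of_idem {E : Type*} [NormedAddCommGroup E]
    [InnerProductSpace ℝ E] (T : E →L[ℝ] E) (hsa : ∀ x y, inner ℝ (T x) y = inner ℝ x (T y))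
    (hid : ∀ x, T (T x) = T x) : LipschitzWith 1 T := by
  have hnorm : ∀ v, ‖T v‖ ≤ ‖v‖ := fun v => by
    have hsq : ‖T v‖ * ‖T v‖ ≤ ‖v‖ * ‖T v‖ :=
      calc ‖T v‖ * ‖T v‖ = inner ℝ (T v) (T v) := (real_inner_self_eq_norm_mul_norm _).symm
        _ = inner ℝ v (T v) := by rw [hsa, hid]
        _ ≤ ‖v‖ * ‖T v‖ := real_inner_le_norm _ _
    rcases (norm_nonneg (T v)).eq_or_lt with h0 | h0
    · exact h0 ▸ norm_nonneg v
    · exact le_of_mul_le_mul_right hsq h0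
  simpa using AddMonoidHomClass.lipschitz_of_bound T 1 (by simpa using hnorm)

theorem tendsto_apply_apply_of_lipschitzWith_one {X ι : Type*} [PseudoMetricSpace X]
    {P : ℕ → X → X} (hP : ∀ n, LipschitzWith 1 (P n))
    (hconv : ∀ x, Tendsto (fun n => P n x) atTop (𝓝 x)) {l : Filter ι} {m : ι → ℕ}
    (hm : Tendsto m l atTop) {u : ι → X} {y : X} (hu : Tendsto u l (𝓝 y)) :
    Tendsto (fun i => P (m i) (u i)) l (𝓝 y) := by
  have hbound : ∀ i, dist (P (m i) (u i)) y ≤ dist (u i) y + dist (P (m i) y) y := fun i =>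
    calc dist (P (m i) (u i)) y ≤ dist (P (m i) (u i)) (P (m i) y) + dist (P (m i) y) y :=
          dist_triangle _ _ _
      _ ≤ dist (u i) y + dist (P (m i) y) y := by
          gcongr
          simpa using (hP (m i)).dist_le_mul (u i) y
  have hlim : Tendsto (fun i => dist (u i) y + dist (P (m i) y) y) l (𝓝 0) := by
    simpa using (tendsto_iff_dist_tendsto_zero.mp hu).add
      (tendsto_iff_dist_tendsto_zero.mp ((hconv y).comp hm))
  exact tendsto_iff_dist_tendsto_zero.mpr
    (squeeze_zero (fun _ => dist_nonneg) hbound hlim)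

theorem exists_isFixedPt_of_eq_approx_apply {X : Type*} [MetricSpace X] {F : X → X}
    (hF : Continuous F) {A : Set X} (hA : IsClosed A) (hK : IsCompact (closure (F '' A)))
    {P : ℕ → X → X} (hP : ∀ n, LipschitzWith 1 (P n))
    (hconv : ∀ x, Tendsto (fun n => P n x) atTop (𝓝 x)) {m : ℕ → ℕ} (hm : Tendsto m atTop atTop)
    {x : ℕ → X} (hxA : ∀ k, x k ∈ A) (hx : ∀ k, x k = P (m k) (F (x k))) :
    ∃ y ∈ A, IsFixedPt F y := by
  obtain ⟨y, -, ψ, hψ, hFx⟩ :=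
    hK.tendsto_subseq fun k => subset_closure (Set.mem_image_of_mem F (hxA k))
  have hxy : Tendsto (x ∘ ψ) atTop (𝓝 y) := by
    have := tendsto_apply_apply_of_lipschitzWith_one hP hconv (hm.comp hψ.tendsto_atTop) hFx
    simpa only [comp_def, ← hx] using this
  have hyA : y ∈ A := hA.mem_of_tendsto hxy (Eventually.of_forall fun k => hxA (ψ k))
  exact ⟨y, hyA, tendsto_nhds_unique ((hF.tendsto y).comp hxy) hFx⟩

theorem galerkin_admissible_general
    {𝓗 : Type*} [NormedAddCommGroup 𝓗] [InnerProductSpace ℝ 𝓗] [CompleteSpace 𝓗]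
    (φ : 𝓗 → ℝ)
    (hgc : Continuous (gradient φ))
    (hcc : ∀ s : Set 𝓗, Bornology.IsBounded s → IsCompact (closure (gradient φ '' s)))
    (Ω : Set 𝓗) (hΩb : Bornology.IsBounded Ω)
    (hadm : ∀ x ∈ frontier Ω, x - gradient φ x ≠ 0)
    (P : ℕ → 𝓗 →L[ℝ] 𝓗)
    (hsa : ∀ (n : ℕ) (x y : 𝓗), inner ℝ (P n x) y = inner ℝ x (P n y))
    (hid : ∀ (n : ℕ) (x : 𝓗), P n (P n x) = P n x)
    (hconv : ∀ x : 𝓗, Filter.Tendsto (fun n => P n x) Filter.atTop (nhds x)) :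
    ∃ N : ℕ, ∀ n ≥ N, ∀ x ∈ frontier Ω,
      x ∈ LinearMap.range (P n : 𝓗 →ₗ[ℝ] 𝓗) → x - P n (gradient φ x) ≠ 0 := by
  by_contra! h
  choose n hn x hxΩ _ hx using h
  obtain ⟨y, hyΩ, hy⟩ := exists_isFixedPt_of_eq_approx_apply hgc isClosed_frontier
    (hcc _ (hΩb.closure.subset frontier_subset_closure))
    (fun k => lipschitzWith_one_of_inner_map_eq_of_idem (P k) (hsa k) (hid k)) hconv
    (tendsto_atTop_mono hn tendsto_id) hxΩ fun k => sub_eq_zero.mp (hx k)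
  exact hadm y hyΩ (sub_eq_zero.mpr hy.symm)

/-- Galerkin approximations of an admissible gradient field remain admissible:
if `∇φ` is completely continuous and `x - ∇φ(x) ≠ 0` on `∂Ω` (`Ω` bounded open),
then for any approximation scheme `(Pₙ)` of orthogonal projections with
finite-dimensional increasing ranges converging strongly to the identity, for all
sufficiently large `n` one has `x - Pₙ∇φ(x) ≠ 0` for every `x ∈ ∂Ω ∩ 𝓗ₙ`. -/
theorem galerkin_admissible
    {𝓗 : Type*} [NormedAddCommGroup 𝓗] [InnerProductSpace ℝ 𝓗] [CompleteSpace 𝓗]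
    (φ : 𝓗 → ℝ) (hφ : ContDiff ℝ 1 φ)
    (hgc : Continuous (gradient φ))
    (hcc : ∀ s : Set 𝓗, Bornology.IsBounded s → IsCompact (closure (gradient φ '' s)))
    (Ω : Set 𝓗) (hΩo : IsOpen Ω) (hΩb : Bornology.IsBounded Ω)
    (hadm : ∀ x ∈ frontier Ω, x - gradient φ x ≠ 0)
    (P : ℕ → 𝓗 →L[ℝ] 𝓗)
    (hsa : ∀ (n : ℕ) (x y : 𝓗), inner ℝ (P n x) y = inner ℝ x (P n y))
    (hid : ∀ (n : ℕ) (x : 𝓗), P n (P n x) = P n x)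
    (hfin : ∀ n : ℕ, FiniteDimensional ℝ (LinearMap.range (P n : 𝓗 →ₗ[ℝ] 𝓗)))
    (hmono : ∀ n : ℕ, LinearMap.range (P n : 𝓗 →ₗ[ℝ] 𝓗) ≤ LinearMap.range (P (n + 1) : 𝓗 →ₗ[ℝ] 𝓗))
    (hconv : ∀ x : 𝓗, Filter.Tendsto (fun n => P n x) Filter.atTop (nhds x)) :
    ∃ N : ℕ, ∀ n ≥ N, ∀ x ∈ frontier Ω,
      x ∈ LinearMap.range (P n : 𝓗 →ₗ[ℝ] 𝓗) → x - P n (gradient φ x) ≠ 0 :=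
  galerkin_admissible_general φ hgc hcc Ω hΩb hadm P hsa hid hconv
end

section
/- Let 𝓗 be a real Hilbert space, φ : 𝓗 → ℝ a continuously differentiable functional whose gradient ∇φ : 𝓗 → 𝓗 is completely continuous, and let Ω ⊂ 𝓗 be a bounded open set such that x - ∇φ(x) ≠ 0 for all x ∈ ∂Ω. Let (Pₙ) be a sequence of orthogonal projections on 𝓗 such that each subspace 𝓗ₙ := Pₙ(𝓗) is finite-dimensional, 𝓗ₙ ⊆ 𝓗ₙ₊₁ for all n, and Pₙ x → x as n → ∞ for every x ∈ 𝓗. Then there exists N ∈ ℕ such that for all n ≥ N, all t ∈ [0,1], and all x ∈ ∂Ω with x ∈ 𝓗ₙ₊₁, one has x - t Pₙ ∇φ(x) - (1-t) Pₙ₊₁ ∇φ(x) ≠ 0. -/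
/-!
Since `∇φ` is completely continuous, `∇φ(∂Ω)` has compact closure `K`, and this makes
`x ↦ x - ∇φ(x)` bounded away from `0` on the closed set `∂Ω`, say by `δ > 0`. By Banach–Steinhaus
the strongly convergent sequence `Pₙ` is equicontinuous, hence converges to the identity uniformly
on `K`; so for large `n` both `Pₙ∇φ(x)` and `Pₙ₊₁∇φ(x)`, and therefore every convex combination
of them, lie within `δ` of `∇φ(x)`, which is at distance at least `δ` from `x`.
-/

open Filter Topology Set

theorem ContinuousLinearMap.tendstoUniformlyOn_of_tendsto {𝕜 E F : Type*}
    [NontriviallyNormedField 𝕜] [NormedAddCommGroup E] [NormedSpace 𝕜 E] [CompleteSpace E]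
    [NormedAddCommGroup F] [NormedSpace 𝕜 F] {T : ℕ → E →L[𝕜] F} {A : E → F}
    (hT : ∀ x, Tendsto (fun n ↦ T n x) atTop (𝓝 (A x))) {K : Set E} (hK : IsCompact K) :
    TendstoUniformlyOn (fun n ↦ T n) A atTop K := by
  have hequi : Equicontinuous ((↑) ∘ T : ℕ → E → F) :=
    (PolynormableSpace.banach_steinhaus fun x ↦ (hT x).isVonNBounded_range 𝕜).equicontinuous
  have hlim := (EquicontinuousOn.tendsto_uniformOnFun_iff_pi (𝔖 := {K | IsCompact K})
    (fun _ hK ↦ hK) (sUnion_eq_univ_iff.2 fun x ↦ ⟨{x}, isCompact_singleton, rfl⟩)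
    (fun _ _ ↦ hequi.equicontinuousOn _) atTop A).2 (tendsto_pi_nhds.2 hT)
  exact UniformOnFun.tendsto_iff_tendstoUniformlyOn.1 hlim K hK

theorem exists_pos_le_norm_sub_self_of_isCompact_closure_image {E : Type*}
    [NormedAddCommGroup E] {f : E → E} {s : Set E} (hf : Continuous f) (hs : IsClosed s)
    (hK : IsCompact (closure (f '' s))) (hfix : ∀ x ∈ s, x - f x ≠ 0) :
    ∃ δ > 0, ∀ x ∈ s, δ ≤ ‖x - f x‖ := by
  have h0 : (0 : E) ∉ closure ((fun x ↦ x - f x) '' s) := by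
    intro h0
    obtain ⟨v, hv, hv0⟩ := mem_closure_iff_seq_limit.1 h0
    choose x hxs hxv using hv
    obtain ⟨a, -, ψ, hψ, hfa⟩ :=
      hK.tendsto_subseq fun k ↦ subset_closure (mem_image_of_mem f (hxs k))
    have hxa : Tendsto (fun k ↦ x (ψ k)) atTop (𝓝 a) := by
      simpa [← hxv] using ((hv0.comp hψ.tendsto_atTop).add hfa)
    have has : a ∈ s := hs.mem_of_tendsto hxa (.of_forall fun k ↦ hxs (ψ k))
    have hfix_a : f a = a := tendsto_nhds_unique ((hf.tendsto a).comp hxa) hfa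
    exact hfix a has (by rw [hfix_a, sub_self])
  rw [Metric.mem_closure_iff] at h0
  push Not at h0
  obtain ⟨δ, hδ, hδle⟩ := h0
  exact ⟨δ, hδ, fun x hx ↦ by simpa [dist_eq_norm'] using hδle _ (mem_image_of_mem _ hx)⟩

theorem galerkin_homotopy_admissible_general
    {𝓗 : Type*} [NormedAddCommGroup 𝓗] [InnerProductSpace ℝ 𝓗] [CompleteSpace 𝓗]
    (φ : 𝓗 → ℝ)
    (hgc : Continuous (gradient φ))
    (hcc : ∀ s : Set 𝓗, Bornology.IsBounded s → IsCompact (closure (gradient φ '' s)))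
    (Ω : Set 𝓗) (hΩb : Bornology.IsBounded Ω)
    (hadm : ∀ x ∈ frontier Ω, x - gradient φ x ≠ 0)
    (P : ℕ → 𝓗 →L[ℝ] 𝓗)
    (hconv : ∀ x : 𝓗, Filter.Tendsto (fun n => P n x) Filter.atTop (nhds x)) :
    ∃ N : ℕ, ∀ n ≥ N, ∀ t ∈ Set.Icc (0 : ℝ) 1, ∀ x ∈ frontier Ω,
      x ∈ LinearMap.range (P (n + 1) : 𝓗 →ₗ[ℝ] 𝓗) →
      x - t • P n (gradient φ x) - (1 - t) • P (n + 1) (gradient φ x) ≠ 0 := by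
  have hK := hcc _ (hΩb.closure.subset frontier_subset_closure)
  obtain ⟨δ, hδ, hgap⟩ :=
    exists_pos_le_norm_sub_self_of_isCompact_closure_image hgc isClosed_frontier hK hadm
  obtain ⟨N, hN⟩ := (Metric.tendstoUniformlyOn_iff.1
    (ContinuousLinearMap.tendstoUniformlyOn_of_tendsto hconv hK) δ hδ).exists_forall_of_atTop
  refine ⟨N, fun n hn t ⟨ht0, ht1⟩ x hx _ ↦ ?_⟩
  have hgx : gradient φ x ∈ closure (gradient φ '' frontier Ω) :=
    subset_closure (mem_image_of_mem _ hx)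
  have hmem : t • P n (gradient φ x) + (1 - t) • P (n + 1) (gradient φ x) ∈
      Metric.ball (gradient φ x) δ :=
    convex_ball _ _ (Metric.mem_ball'.2 (hN n hn _ hgx))
      (Metric.mem_ball'.2 (hN (n + 1) (by omega) _ hgx)) ht0 (by linarith) (by ring)
  rw [sub_sub, sub_ne_zero]
  intro hx_eq
  rw [← hx_eq, Metric.mem_ball, dist_eq_norm] at hmem
  exact (hgap x hx).not_gt hmem

/-- Galerkin approximations of an admissible gradient field give admissible homotopies:
if `∇φ` is completely continuous and `x - ∇φ(x) ≠ 0` on `∂Ω` (`Ω` bounded open),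
then for any approximation scheme `(Pₙ)` of orthogonal projections with
finite-dimensional increasing ranges converging strongly to the identity, for all
sufficiently large `n`, all `t ∈ [0,1]` and all `x ∈ ∂Ω ∩ 𝓗ₙ₊₁` one has
`x - tPₙ∇φ(x) - (1-t)Pₙ₊₁∇φ(x) ≠ 0`. -/
theorem galerkin_homotopy_admissible
    {𝓗 : Type*} [NormedAddCommGroup 𝓗] [InnerProductSpace ℝ 𝓗] [CompleteSpace 𝓗]
    (φ : 𝓗 → ℝ) (hφ : ContDiff ℝ 1 φ)
    (hgc : Continuous (gradient φ))
    (hcc : ∀ s : Set 𝓗, Bornology.IsBounded s → IsCompact (closure (gradient φ '' s)))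
    (Ω : Set 𝓗) (hΩo : IsOpen Ω) (hΩb : Bornology.IsBounded Ω)
    (hadm : ∀ x ∈ frontier Ω, x - gradient φ x ≠ 0)
    (P : ℕ → 𝓗 →L[ℝ] 𝓗)
    (hsa : ∀ (n : ℕ) (x y : 𝓗), (inner ℝ (P n x) y : ℝ) = inner ℝ x (P n y))
    (hid : ∀ (n : ℕ) (x : 𝓗), P n (P n x) = P n x)
    (hfin : ∀ n : ℕ, FiniteDimensional ℝ (LinearMap.range (P n : 𝓗 →ₗ[ℝ] 𝓗)))
    (hmono : ∀ n : ℕ, LinearMap.range (P n : 𝓗 →ₗ[ℝ] 𝓗) ≤ LinearMap.range (P (n + 1) : 𝓗 →ₗ[ℝ] 𝓗))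
    (hconv : ∀ x : 𝓗, Filter.Tendsto (fun n => P n x) Filter.atTop (nhds x)) :
    ∃ N : ℕ, ∀ n ≥ N, ∀ t ∈ Set.Icc (0 : ℝ) 1, ∀ x ∈ frontier Ω,
      x ∈ LinearMap.range (P (n + 1) : 𝓗 →ₗ[ℝ] 𝓗) →
      x - t • P n (gradient φ x) - (1 - t) • P (n + 1) (gradient φ x) ≠ 0 :=
  galerkin_homotopy_admissible_general φ hgc hcc Ω hΩb hadm P hconv
end

section
/- Let f : ℝ^N → ℝ be twice continuously differentiable and let x : ℝ → ℝ^N be a non-constant p-periodic (p > 0) twice continuously differentiable solution of ẍ(t) = -∇f(x(t)). Let M ≥ sup_{t∈ℝ} ‖x(t)‖ and set K := sup{‖∇²f(y)‖ : y ∈ ℝ^N, ‖y‖ ≤ M}, where ‖∇²f(y)‖ is the operator norm of the Hessian of f at y. Then K > 0 and p² ≥ 1/K. -/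
/-!
Let `D` be the oscillation `sup ‖x t - x s‖` of the orbit; it is positive because `x` is
non-constant. On the ball of radius `M` the gradient is `K`-Lipschitz, so the oscillation of
`ẍ = -∇f(x)` is at most `K D`. The derivative of a periodic function has mean zero over a period,
hence is bounded by its own oscillation; and the oscillation of a periodic function is at most
`p` times a bound on its derivative. Passing from `ẍ` to `ẋ` to `x` gives `D ≤ K p² D`.
-/

open Set

theorem Function.Periodic.periodic_deriv {𝕜 F : Type*} [NontriviallyNormedField 𝕜]
    [NormedAddCommGroup F] [NormedSpace 𝕜 F] {f : 𝕜 → F} {c : 𝕜} (h : Function.Periodic f c) :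
    Function.Periodic (deriv f) c := fun t => by
  rw [← deriv_comp_add_const, funext h]

theorem ContDiff.gradient {F : Type*} [NormedAddCommGroup F] [InnerProductSpace ℝ F]
    [CompleteSpace F] {f : F → ℝ} {m n : WithTop ℕ∞} (hf : ContDiff ℝ n f) (hmn : m + 1 ≤ n) :
    ContDiff ℝ m (gradient f) :=
  (InnerProductSpace.toDual ℝ F).symm.contDiff.comp (hf.fderiv_right hmn)

theorem norm_sub_le_sSup_norm_fderiv_mul {E F : Type*} [NormedAddCommGroup E] [NormedSpace ℝ E]
    [ProperSpace E] [NormedAddCommGroup F] [NormedSpace ℝ F] {g : E → F} (hg : ContDiff ℝ 1 g)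
    {M : ℝ} {a b : E} (ha : ‖a‖ ≤ M) (hb : ‖b‖ ≤ M) :
    ‖g a - g b‖ ≤ sSup {c : ℝ | ∃ y : E, ‖y‖ ≤ M ∧ c = ‖fderiv ℝ g y‖} * ‖a - b‖ := by
  have hset : {c : ℝ | ∃ y : E, ‖y‖ ≤ M ∧ c = ‖fderiv ℝ g y‖} =
      (fun y => ‖fderiv ℝ g y‖) '' Metric.closedBall 0 M := by
    ext c
    simp [eq_comm]
  have hbdd : BddAbove {c : ℝ | ∃ y : E, ‖y‖ ≤ M ∧ c = ‖fderiv ℝ g y‖} := by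
    rw [hset]
    exact ((isCompact_closedBall 0 M).image
      (hg.continuous_fderiv one_ne_zero).norm).bddAbove
  refine (convex_closedBall (0 : E) M).norm_image_sub_le_of_norm_fderiv_le
    (fun y _ => hg.differentiable one_ne_zero y)
    (fun y hy => le_csSup hbdd ⟨y, by simpa using hy, rfl⟩) (by simpa using hb) (by simpa using ha)

variable {E : Type*} [NormedAddCommGroup E] [NormedSpace ℝ E]

theorem Function.Periodic.norm_sub_le_mul_period {y : ℝ → E} {p B : ℝ}
    (hper : Function.Periodic y p) (hp : 0 < p) (hy : Differentiable ℝ y)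
    (hB : ∀ t, ‖deriv y t‖ ≤ B) (s t : ℝ) : ‖y t - y s‖ ≤ B * p := by
  obtain ⟨t', ht', hyt⟩ := hper.exists_mem_Ico hp t s
  have hB0 : 0 ≤ B := (norm_nonneg _).trans (hB 0)
  calc ‖y t - y s‖ = ‖y t' - y s‖ := by rw [hyt]
    _ ≤ B * ‖t' - s‖ := convex_univ.norm_image_sub_le_of_norm_deriv_le
        (fun u _ => hy u) (fun u _ => hB u) (mem_univ _) (mem_univ _)
    _ ≤ B * p := by
        gcongr
        rw [Real.norm_of_nonneg (by linarith [ht'.1])]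
        linarith [ht'.2]

theorem Function.Periodic.norm_deriv_le_of_norm_deriv_sub_le [CompleteSpace E] {y : ℝ → E}
    {p C : ℝ} (hper : Function.Periodic y p) (hp : 0 < p) (hy : Differentiable ℝ y)
    (hy' : Continuous (deriv y)) (hC : ∀ s t, ‖deriv y t - deriv y s‖ ≤ C) (t : ℝ) :
    ‖deriv y t‖ ≤ C := by
  have hmean : ∫ s in t..t + p, deriv y s = 0 := by
    rw [intervalIntegral.integral_deriv_eq_sub (fun s _ => hy s) (hy'.intervalIntegrable _ _),
      hper t, sub_self]
  have hsmul : p • deriv y t = ∫ s in t..t + p, (deriv y t - deriv y s) := by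
    rw [intervalIntegral.integral_sub intervalIntegrable_const (hy'.intervalIntegrable _ _),
      hmean, intervalIntegral.integral_const]
    simp
  have hint : ‖∫ s in t..t + p, (deriv y t - deriv y s)‖ ≤ C * |t + p - t| :=
    intervalIntegral.norm_integral_le_of_norm_le_const fun s _ => hC s t
  rw [← hsmul, norm_smul, Real.norm_of_nonneg hp.le, add_sub_cancel_left, abs_of_pos hp,
    mul_comm] at hint
  exact le_of_mul_le_mul_right hint hp

theorem Function.Periodic.norm_sub_le_mul_sq_period [CompleteSpace E] {x : ℝ → E} {p K D : ℝ}
    (hper : Function.Periodic x p) (hp : 0 < p) (hx : ContDiff ℝ 2 x) (hK : 0 ≤ K)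
    (hacc : ∀ s t, ‖deriv (deriv x) t - deriv (deriv x) s‖ ≤ K * ‖x t - x s‖)
    (hD : ∀ s t, ‖x t - x s‖ ≤ D) (s t : ℝ) : ‖x t - x s‖ ≤ K * p ^ 2 * D := by
  have hx' : ContDiff ℝ 1 (deriv x) := hx.iterate_deriv' 1 1
  have hx'' : Continuous (deriv (deriv x)) := hx'.continuous_deriv le_rfl
  have hx'diff : Differentiable ℝ (deriv x) := hx'.differentiable one_ne_zero
  have hacc_le : ∀ t, ‖deriv (deriv x) t‖ ≤ K * D :=
    hper.periodic_deriv.norm_deriv_le_of_norm_deriv_sub_le hp hx'diff hx''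
      fun s t => (hacc s t).trans (by gcongr; exact hD s t)
  have hvel_le : ∀ t, ‖deriv x t‖ ≤ K * D * p :=
    hper.norm_deriv_le_of_norm_deriv_sub_le hp (hx.differentiable two_ne_zero)
      hx'.continuous (hper.periodic_deriv.norm_sub_le_mul_period hp hx'diff hacc_le)
  calc ‖x t - x s‖ ≤ K * D * p * p :=
        hper.norm_sub_le_mul_period hp (hx.differentiable two_ne_zero) hvel_le s t
    _ = K * p ^ 2 * D := by ring

theorem Function.Periodic.one_le_mul_sq_period [CompleteSpace E] {x : ℝ → E} {p K : ℝ}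
    (hper : Function.Periodic x p) (hp : 0 < p) (hx : ContDiff ℝ 2 x) (hK : 0 ≤ K)
    (hacc : ∀ s t, ‖deriv (deriv x) t - deriv (deriv x) s‖ ≤ K * ‖x t - x s‖)
    (hnc : ∃ t₁ t₂, x t₁ ≠ x t₂) : 1 ≤ K * p ^ 2 := by
  obtain ⟨t₁, t₂, hne⟩ := hnc
  set D := ⨆ q : ℝ × ℝ, ‖x q.2 - x q.1‖
  have hbdd : BddAbove (range fun q : ℝ × ℝ => ‖x q.2 - x q.1‖) := by
    obtain ⟨C, hC⟩ :=
      Metric.isBounded_iff.mp (hper.isBounded_of_continuous hp.ne' hx.continuous)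
    exact ⟨C, forall_mem_range.mpr fun q => dist_eq_norm (x q.2) (x q.1) ▸
      hC (mem_range_self q.2) (mem_range_self q.1)⟩
  have hD : ∀ s t, ‖x t - x s‖ ≤ D := fun s t => le_ciSup hbdd (s, t)
  have hDpos : 0 < D := (norm_sub_pos_iff.mpr hne.symm).trans_le (hD t₁ t₂)
  have hDle : D ≤ K * p ^ 2 * D :=
    ciSup_le fun q => hper.norm_sub_le_mul_sq_period hp hx hK hacc hD q.1 q.2
  nlinarith

/-- Lower bound on the minimal period: if `x` is a non-constant `p`-periodic `C²`
solution of `ẍ = -∇f(x)` with `‖x(t)‖ ≤ M` for all `t`, and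
`K = sup{‖∇²f(y)‖ : ‖y‖ ≤ M}`, then `K > 0` and `p² ≥ 1/K`. -/
theorem minimal_period_bound
    {N : ℕ} (f : EuclideanSpace ℝ (Fin N) → ℝ) (hf : ContDiff ℝ 2 f)
    (p : ℝ) (hp : 0 < p)
    (x : ℝ → EuclideanSpace ℝ (Fin N)) (hx : ContDiff ℝ 2 x)
    (hper : Function.Periodic x p) (hnc : ∃ t₁ t₂, x t₁ ≠ x t₂)
    (heq : ∀ t : ℝ, deriv (deriv x) t = -gradient f (x t))
    (M : ℝ) (hM : ∀ t : ℝ, ‖x t‖ ≤ M)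
    (K : ℝ)
    (hK : K = sSup {c : ℝ | ∃ y : EuclideanSpace ℝ (Fin N),
      ‖y‖ ≤ M ∧ c = ‖fderiv ℝ (gradient f) y‖}) :
    0 < K ∧ 1 / K ≤ p ^ 2 := by
  have hK0 : 0 ≤ K := hK ▸ Real.sSup_nonneg (by rintro _ ⟨y, -, rfl⟩; positivity)
  have hacc : ∀ s t, ‖deriv (deriv x) t - deriv (deriv x) s‖ ≤ K * ‖x t - x s‖ := by
    intro s t
    rw [heq, heq, neg_sub_neg, norm_sub_rev (x t), hK]
    exact norm_sub_le_sSup_norm_fderiv_mul (hf.gradient le_rfl) (hM s) (hM t)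
  have hKp : 1 ≤ K * p ^ 2 := hper.one_le_mul_sq_period hp hx hK0 hacc hnc
  have hKpos : 0 < K := pos_of_mul_pos_left (one_pos.trans_le hKp) (by positivity)
  exact ⟨hKpos, by rwa [div_le_iff₀ hKpos, mul_comm]⟩
end
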